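/- arXiv:2603.09048 — 4 statements merged into one kernel-verified Lean document; each statement's English description precedes it below -/
import Mathlib

section
/- Let u, v, t be points in the plane and i ∈ ℤ/6. Suppose u and v both lie in the region of C_t^i ∪ C_t^{i+1} between the bisectors B_t^i and B_t^{i+1}, and v ∈ C_u^{i+3} ∪ C_u^{i+4}. Then ‖uv‖_hex ≤ 2(‖ut‖_thex − ‖vt‖_thex). -/
open Real

/-- Hexagonal norm: unit disk is the regular hexagon with east/west vertices (±1,0). -/
noncomputable def hexNorm (p : ℝ × ℝ) : ℝ :=
  max (2 * |p.2| / Real.sqrt 3) (max |p.1 + p.2 / Real.sqrt 3| |p.1 - p.2 / Real.sqrt 3|)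

/-- Tipped hexagonal norm: unit disk is the regular hexagon with north/south vertices (0, ±2/√3). -/
noncomputable def thexNorm (p : ℝ × ℝ) : ℝ :=
  max |p.1| (max (|p.1 + Real.sqrt 3 * p.2| / 2) (|p.1 - Real.sqrt 3 * p.2| / 2))

/-- Euclidean norm of a planar vector. -/
noncomputable def eucNorm (p : ℝ × ℝ) : ℝ := Real.sqrt (p.1 ^ 2 + p.2 ^ 2)

/-- Rotation of a planar vector by angle θ (counterclockwise). -/
noncomputable def rot (θ : ℝ) (p : ℝ × ℝ) : ℝ × ℝ :=
  (Real.cos θ * p.1 - Real.sin θ * p.2, Real.sin θ * p.1 + Real.cos θ * p.2)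

/-- The cone of directions pointing straight down (spanning 60°), bounded by
lines of slopes √3 and -√3 through the origin. -/
def cone0 : Set (ℝ × ℝ) := {v | v.2 ≤ 0 ∧ Real.sqrt 3 * |v.1| ≤ -v.2}

/-- Coordinates of q in the frame of the i-th cone of p (cone rotated back to cone0). -/
noncomputable def localCoord (p : ℝ × ℝ) (i : ZMod 6) (q : ℝ × ℝ) : ℝ × ℝ :=
  rot (-((i.val : ℝ) * (Real.pi / 3))) (q - p)

/-- The closed cone `C_p^i`: the six cones about p determined by the lines of
slopes -√3, 0, √3 through p, labeled counterclockwise with `C_p^0` directly below p. -/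
def cone (p : ℝ × ℝ) (i : ZMod 6) : Set (ℝ × ℝ) :=
  {q | localCoord p i q ∈ cone0}

/-- The triangle `∇_u^v`: points of the cone of u containing v whose hex-distance
to u is at most that of v. -/
def nabla (u v : ℝ × ℝ) : Set (ℝ × ℝ) :=
  {r | hexNorm (r - u) ≤ hexNorm (v - u) ∧ ∀ i : ZMod 6, v ∈ cone u i → r ∈ cone u i}

/-- Side length of an equilateral triangle with sides of slopes -√3, 0, √3,
realized as its diameter in the hexagonal norm. -/
noncomputable def sideLen (T : Set (ℝ × ℝ)) : ℝ :=
  sSup ((fun pq : (ℝ × ℝ) × (ℝ × ℝ) => hexNorm (pq.1 - pq.2)) '' (T ×ˢ T))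

/-- General position: no two points lie on a common line of slope -√3, 0 or √3. -/
def genPos (P : Finset (ℝ × ℝ)) : Prop :=
  ∀ p ∈ P, ∀ q ∈ P, p ≠ q →
    p.2 ≠ q.2 ∧ p.2 - q.2 ≠ Real.sqrt 3 * (p.1 - q.1) ∧
      p.2 - q.2 ≠ -(Real.sqrt 3) * (p.1 - q.1)

/-- Edge of the directed Theta-6 graph of P: from u to v exactly when the interior
of `∇_u^v` contains no point of P. -/
def isEdge (P : Finset (ℝ × ℝ)) (u v : ℝ × ℝ) : Prop :=
  u ∈ P ∧ v ∈ P ∧ u ≠ v ∧ ∀ p ∈ P, p ∉ interior (nabla u v)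

/-- A directed path in the Theta-6 graph of P from s to t, given as its list of vertices. -/
def isPath (P : Finset (ℝ × ℝ)) (ℓ : List (ℝ × ℝ)) (s t : ℝ × ℝ) : Prop :=
  ℓ ≠ [] ∧ ℓ.head? = some s ∧ ℓ.getLast? = some t ∧ ℓ.Chain' (isEdge P)

/-- Euclidean length of a path. -/
noncomputable def pathLen (ℓ : List (ℝ × ℝ)) : ℝ :=
  ((ℓ.zip ℓ.tail).map (fun pq => eucNorm (pq.2 - pq.1))).sum

/-- The region of `C_t^i ∪ C_t^{i+1}` between the bisectors `B_t^i` and `B_t^{i+1}`: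
points of `C_t^i` on the counterclockwise side of `B_t^i` together with points of
`C_t^{i+1}` on the clockwise side of `B_t^{i+1}`. -/
noncomputable def betweenBisectors (t : ℝ × ℝ) (i : ZMod 6) : Set (ℝ × ℝ) :=
  {w | (w ∈ cone t i ∧ 0 ≤ (localCoord t i w).1) ∨
       (w ∈ cone t (i + 1) ∧ (localCoord t (i + 1) w).1 ≤ 0)}


/-! Rotating by `-i π / 3` carries the cone `C_t^i` onto the downward cone `cone0`, and both
hexagonal norms are invariant under rotation by `π / 3`, so everything may be computed in these
local coordinates. There `‖·‖_thex` agrees with the linear form `(x - √3 y) / 2` on the region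
between the bisectors, while `v - u` lies in `{0 ≤ y, √3 x ≤ y}`, where `‖·‖_hex` is bounded by
`√3 y - x`, which is twice the difference of the two values of that linear form. -/

lemma rot_add (a b : ℝ) (p : ℝ × ℝ) : rot (a + b) p = rot a (rot b p) := by
  simp only [rot, Real.cos_add, Real.sin_add, Prod.mk.injEq]
  constructor <;> ring

lemma rot_sub (θ : ℝ) (p q : ℝ × ℝ) : rot θ (p - q) = rot θ p - rot θ q := by
  simp only [rot, Prod.fst_sub, Prod.snd_sub, Prod.mk_sub_mk, Prod.mk.injEq]
  constructor <;> ring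

lemma rot_add_int_mul_two_pi (θ : ℝ) (k : ℤ) (p : ℝ × ℝ) : rot (θ + k * (2 * π)) p = rot θ p := by
  simp only [rot, Real.cos_add_int_mul_two_pi, Real.sin_add_int_mul_two_pi]

lemma rot_neg_pi (p : ℝ × ℝ) : rot (-π) p = -p := by
  ext <;> simp [rot]

lemma rot_pi_div_three (p : ℝ × ℝ) :
    rot (π / 3) p = ((p.1 - √3 * p.2) / 2, √3 * p.1 / 2 + p.2 / 2) := by
  simp only [rot, Real.cos_pi_div_three, Real.sin_pi_div_three]
  ext <;> ring

lemma rot_neg_pi_div_three (p : ℝ × ℝ) :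
    rot (-(π / 3)) p = (p.1 / 2 + √3 * p.2 / 2, -(√3 * p.1) / 2 + p.2 / 2) := by
  simp only [rot, Real.cos_neg, Real.sin_neg, Real.cos_pi_div_three, Real.sin_pi_div_three]
  ext <;> ring

lemma apply_rot_neg_nat_mul_pi_div_three {α : Type*} {f : ℝ × ℝ → α}
    (hf : ∀ p, f (rot (π / 3) p) = f p) (n : ℕ) (p : ℝ × ℝ) :
    f (rot (-(n * (π / 3))) p) = f p := by
  have hrot : ∀ (n : ℕ) q, f (rot (n * (π / 3)) q) = f q := by
    intro n
    induction n with
    | zero => simp [rot]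
    | succ n ih =>
      intro q
      rw [Nat.cast_succ, add_one_mul, add_comm, rot_add, hf, ih]
  calc f (rot (-(n * (π / 3))) p) = f (rot (n * (π / 3)) (rot (-(n * (π / 3))) p)) :=
        (hrot n _).symm
    _ = f p := by rw [← rot_add, add_neg_cancel]; simp [rot]

lemma localCoord_natCast (p q : ℝ × ℝ) (n : ℕ) :
    localCoord p n q = rot (-(n * (π / 3))) (q - p) := by
  have hval : ((n : ZMod 6).val : ℝ) = n - (n / 6 : ℕ) * 6 := by
    rw [ZMod.val_natCast, Nat.mod_eq_sub_mul_div, Nat.cast_sub (Nat.mul_div_le n 6)]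
    push_cast; ring
  rw [localCoord, hval, ← rot_add_int_mul_two_pi _ (-((n / 6 : ℕ) : ℤ))]
  congr 1
  simp only [Int.cast_neg, Int.cast_natCast]; ring

lemma localCoord_add_natCast (p q : ℝ × ℝ) (i : ZMod 6) (k : ℕ) :
    localCoord p (i + k) q = rot (-(k * (π / 3))) (localCoord p i q) := by
  rw [← ZMod.natCast_zmod_val i, ← Nat.cast_add, localCoord_natCast, localCoord_natCast,
    ← rot_add]
  congr 1
  push_cast; ring

lemma localCoord_add_one (p q : ℝ × ℝ) (i : ZMod 6) :
    localCoord p (i + 1) q = rot (-(π / 3)) (localCoord p i q) := by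
  simpa using localCoord_add_natCast p q i 1

lemma localCoord_add_three (p q : ℝ × ℝ) (i : ZMod 6) :
    localCoord p (i + 3) q = -localCoord p i q := by
  rw [← rot_neg_pi, show (3 : ZMod 6) = ((3 : ℕ) : ZMod 6) by norm_num, localCoord_add_natCast]
  congr 2
  push_cast; ring

lemma localCoord_add_four (p q : ℝ × ℝ) (i : ZMod 6) :
    localCoord p (i + 4) q = -localCoord p (i + 1) q := by
  rw [show i + 4 = i + 1 + 3 by ring, localCoord_add_three]

lemma localCoord_sub_localCoord (t u v : ℝ × ℝ) (i : ZMod 6) :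
    localCoord t i v - localCoord t i u = localCoord u i v := by
  rw [localCoord, localCoord, localCoord, ← rot_sub, sub_sub_sub_cancel_right]

lemma hexNorm_rot_pi_div_three (p : ℝ × ℝ) : hexNorm (rot (π / 3) p) = hexNorm p := by
  obtain ⟨x, y⟩ := p
  have hs : √3 * √3 = 3 := Real.mul_self_sqrt (by norm_num)
  have e1 : 2 * |√3 * x / 2 + y / 2| / √3 = |x + y / √3| := by
    rw [show √3 * x / 2 + y / 2 = √3 * (x + y / √3) / 2 by field_simp, abs_div, abs_mul,
      abs_of_pos (by positivity : (0 : ℝ) < √3), abs_two]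
    field_simp
  have e2 : (x - √3 * y) / 2 + (√3 * x / 2 + y / 2) / √3 = x - y / √3 := by
    field_simp; linear_combination (-y) * hs
  have e3 : (x - √3 * y) / 2 - (√3 * x / 2 + y / 2) / √3 = -(2 * y) / √3 := by
    field_simp; linear_combination (-y) * hs
  simp only [hexNorm, rot_pi_div_three, e1, e2, e3, abs_div, abs_neg, abs_mul, abs_two,
    abs_of_pos (by positivity : (0 : ℝ) < √3)]
  rw [max_comm |x - y / √3|, max_left_comm]

lemma thexNorm_rot_pi_div_three (p : ℝ × ℝ) : thexNorm (rot (π / 3) p) = thexNorm p := by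
  obtain ⟨x, y⟩ := p
  have hs : √3 * √3 = 3 := Real.mul_self_sqrt (by norm_num)
  have e1 : (x - √3 * y) / 2 + √3 * (√3 * x / 2 + y / 2) = 2 * x := by
    linear_combination (x / 2) * hs
  have e2 : (x - √3 * y) / 2 - √3 * (√3 * x / 2 + y / 2) = -(x + √3 * y) := by
    linear_combination (-x / 2) * hs
  simp only [thexNorm, rot_pi_div_three, e1, e2, abs_neg, abs_div, abs_mul, abs_two]
  rw [mul_div_cancel_left₀ _ two_ne_zero, max_left_comm, max_comm (|x - √3 * y| / 2)]

lemma hexNorm_localCoord (p q : ℝ × ℝ) (i : ZMod 6) :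
    hexNorm (localCoord p i q) = hexNorm (q - p) :=
  apply_rot_neg_nat_mul_pi_div_three hexNorm_rot_pi_div_three _ _

lemma thexNorm_localCoord (p q : ℝ × ℝ) (i : ZMod 6) :
    thexNorm (localCoord p i q) = thexNorm (q - p) :=
  apply_rot_neg_nat_mul_pi_div_three thexNorm_rot_pi_div_three _ _

lemma thexNorm_sub_comm (p q : ℝ × ℝ) : thexNorm (p - q) = thexNorm (q - p) := by
  simp only [thexNorm, Prod.fst_sub, Prod.snd_sub]
  rw [abs_sub_comm, show p.1 - q.1 + √3 * (p.2 - q.2) = -(q.1 - p.1 + √3 * (q.2 - p.2)) by ring,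
    show p.1 - q.1 - √3 * (p.2 - q.2) = -(q.1 - p.1 - √3 * (q.2 - p.2)) by ring,
    abs_neg, abs_neg]

lemma localCoord_of_mem_betweenBisectors {t w : ℝ × ℝ} {i : ZMod 6}
    (hw : w ∈ betweenBisectors t i) :
    0 ≤ (localCoord t i w).1 ∧ (localCoord t i w).1 + √3 * (localCoord t i w).2 ≤ 0 := by
  have hs : √3 * √3 = 3 := Real.mul_self_sqrt (by norm_num)
  have hs0 : 0 < √3 := by positivity
  simp only [betweenBisectors, cone, Set.mem_ofPred_eq, localCoord_add_one, cone0,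
    rot_neg_pi_div_three] at hw
  generalize localCoord t i w = W at hw ⊢
  obtain ⟨x, y⟩ := W
  rcases hw with ⟨⟨-, hcone⟩, hx⟩ | ⟨⟨-, hcone⟩, hbis⟩
  · rw [abs_of_nonneg hx] at hcone
    refine ⟨hx, ?_⟩
    nlinarith [mul_le_mul_of_nonneg_left hcone hs0.le]
  · rw [abs_of_nonpos hbis] at hcone
    refine ⟨?_, by linarith⟩
    nlinarith [mul_le_mul_of_nonneg_left hcone hs0.le]

lemma thexNorm_eq_of_nonneg_of_add_le {x y : ℝ} (hx : 0 ≤ x) (hxy : x + √3 * y ≤ 0) :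
    thexNorm (x, y) = (x - √3 * y) / 2 := by
  rw [thexNorm, abs_of_nonneg hx, abs_of_nonpos hxy, abs_of_nonneg (by linarith : 0 ≤ x - √3 * y),
    max_eq_right (show -(x + √3 * y) / 2 ≤ (x - √3 * y) / 2 by linarith),
    max_eq_right (show x ≤ (x - √3 * y) / 2 by linarith)]

lemma localCoord_of_mem_cone_add_three_union {u v : ℝ × ℝ} {i : ZMod 6}
    (hv : v ∈ cone u (i + 3) ∪ cone u (i + 4)) :
    0 ≤ (localCoord u i v).2 ∧ √3 * (localCoord u i v).1 ≤ (localCoord u i v).2 := by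
  have hs : √3 * √3 = 3 := Real.mul_self_sqrt (by norm_num)
  have hs0 : 0 < √3 := by positivity
  simp only [Set.mem_union, cone, Set.mem_ofPred_eq, localCoord_add_three, localCoord_add_four,
    localCoord_add_one, cone0, rot_neg_pi_div_three, Prod.fst_neg, Prod.snd_neg,
    abs_neg, neg_neg] at hv
  generalize localCoord u i v = D at hv ⊢
  obtain ⟨x, y⟩ := D
  rcases hv with ⟨hy, hcone⟩ | ⟨hy, hcone⟩
  · exact ⟨by linarith, by nlinarith [le_abs_self x]⟩
  · exact ⟨by nlinarith [neg_abs_le (x / 2 + √3 * y / 2)], by linarith⟩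

lemma hexNorm_le_of_nonneg_of_le {x y : ℝ} (hy : 0 ≤ y) (hxy : √3 * x ≤ y) :
    hexNorm (x, y) ≤ √3 * y - x := by
  have hs : √3 * √3 = 3 := Real.mul_self_sqrt (by norm_num)
  have hs0 : 0 < √3 := by positivity
  have hdiv : y / √3 = √3 * y / 3 := by
    rw [div_eq_iff hs0.ne']; linear_combination (-y / 3) * hs
  have h3x : 3 * x ≤ √3 * y := by nlinarith [mul_le_mul_of_nonneg_left hxy hs0.le]
  rw [hexNorm, hdiv, abs_of_nonneg hy]
  refine max_le ?_ (max_le (abs_le.2 ⟨?_, ?_⟩) (abs_le.2 ⟨?_, ?_⟩))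
  · rw [div_le_iff₀ hs0]; nlinarith
  all_goals nlinarith

theorem stmt2 (u v t : ℝ × ℝ) (i : ZMod 6)
    (hu : u ∈ betweenBisectors t i) (hv : v ∈ betweenBisectors t i)
    (hvc : v ∈ cone u (i + 3) ∪ cone u (i + 4)) :
    hexNorm (v - u) ≤ 2 * (thexNorm (t - u) - thexNorm (t - v)) := by
  have thexNorm_eq {w : ℝ × ℝ} (hw : w ∈ betweenBisectors t i) :
      thexNorm (t - w) = ((localCoord t i w).1 - √3 * (localCoord t i w).2) / 2 := by
    obtain ⟨hx, hxy⟩ := localCoord_of_mem_betweenBisectors hw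
    rw [thexNorm_sub_comm, ← thexNorm_localCoord t w i, ← thexNorm_eq_of_nonneg_of_add_le hx hxy]
  obtain ⟨hy, hxy⟩ := localCoord_of_mem_cone_add_three_union hvc
  calc hexNorm (v - u) = hexNorm (localCoord u i v) := (hexNorm_localCoord u v i).symm
    _ ≤ √3 * (localCoord u i v).2 - (localCoord u i v).1 := hexNorm_le_of_nonneg_of_le hy hxy
    _ = 2 * (thexNorm (t - u) - thexNorm (t - v)) := by
      rw [thexNorm_eq hu, thexNorm_eq hv, ← localCoord_sub_localCoord t u v i,
        Prod.fst_sub, Prod.snd_sub]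
      ring
end

section
/- Let u, v, t be points in the plane such that u ∈ C_t^0 lies to the left of the bisector B_t^0, v ∈ C_t^1 lies above the bisector B_t^1, and the segment uv is contained in the triangle ∇_u^t. Then 2‖vt‖_thex ≤ ‖uv‖_hex. -/
open Real

theorem stmt3 (u v t : ℝ × ℝ)
    (hu : u ∈ cone t 0) (huLeft : u.1 ≤ t.1)
    (hv : v ∈ cone t 1) (hvAbove : 0 ≤ (localCoord t 1 v).1)
    (hseg : segment ℝ u v ⊆ nabla u t) :
    2 * thexNorm (t - v) ≤ hexNorm (v - u) := by
  have s3 : (0:ℝ) < Real.sqrt 3 := Real.sqrt_pos.mpr (by norm_num)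
  have h3 : Real.sqrt 3 * Real.sqrt 3 = 3 := Real.mul_self_sqrt (by norm_num)
  have e0 : ((0 : ZMod 6).val : ℝ) = 0 := by norm_num [show (0 : ZMod 6).val = 0 from rfl]
  have e1 : ((1 : ZMod 6).val : ℝ) = 1 := by norm_num [show (1 : ZMod 6).val = 1 from rfl]
  have e3 : ((3 : ZMod 6).val : ℝ) = 3 := by norm_num [show (3 : ZMod 6).val = 3 from rfl]
  have epi : (3:ℝ) * (Real.pi / 3) = Real.pi := by ring
  -- unpack hu : u ∈ cone t 0
  simp only [cone, cone0, localCoord, rot, Set.mem_setOf_eq, Prod.fst_sub, Prod.snd_sub,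
    e0, zero_mul, neg_zero, Real.cos_zero, Real.sin_zero, one_mul, zero_mul, sub_zero,
    zero_add] at hu
  obtain ⟨hu1, hu2⟩ := hu
  -- unpack hv : v ∈ cone t 1 and hvAbove
  simp only [cone, cone0, localCoord, rot, Set.mem_setOf_eq, Prod.fst_sub, Prod.snd_sub,
    e1, one_mul, Real.cos_neg, Real.sin_neg, Real.cos_pi_div_three, Real.sin_pi_div_three,
    neg_mul, neg_neg, sub_neg_eq_add] at hv hvAbove
  obtain ⟨hv1, hv2⟩ := hv
  rw [abs_of_nonneg hvAbove] at hv2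
  -- v ∈ nabla u t, hence v ∈ cone u 3 since t ∈ cone u 3
  have hvn : v ∈ nabla u t := hseg (right_mem_segment ℝ u v)
  have ht3 : t ∈ cone u 3 := by
    simp only [cone, cone0, localCoord, rot, Set.mem_setOf_eq, Prod.fst_sub, Prod.snd_sub,
      e3, epi, Real.cos_neg, Real.sin_neg, Real.cos_pi, Real.sin_pi, neg_zero, zero_mul,
      neg_mul, one_mul, sub_zero, zero_add, neg_sub, abs_sub_comm]
    exact ⟨by linarith, by linarith [hu2]⟩
  have hv3 : v ∈ cone u 3 := hvn.2 3 ht3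
  simp only [cone, cone0, localCoord, rot, Set.mem_setOf_eq, Prod.fst_sub, Prod.snd_sub,
    e3, epi, Real.cos_neg, Real.sin_neg, Real.cos_pi, Real.sin_pi, neg_zero, zero_mul,
    neg_mul, one_mul, sub_zero, zero_add, neg_sub, abs_sub_comm] at hv3
  obtain ⟨hv31, hv32⟩ := hv3
  rw [abs_sub_comm] at hv32
  -- basic sign facts about x := v.1 - t.1, y := v.2 - t.2
  have hy : v.2 - t.2 ≤ 0 := by nlinarith [hv2, hvAbove, h3, s3]
  have hsy : Real.sqrt 3 * (v.2 - t.2) ≤ 0 := by nlinarith [s3]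
  have hxy : 0 ≤ v.1 - t.1 + Real.sqrt 3 * (v.2 - t.2) := by nlinarith [hvAbove]
  have hx0 : 0 ≤ v.1 - t.1 := by linarith
  -- thexNorm (t - v) ≤ v.1 - t.1
  have hsy' : Real.sqrt 3 * (t.2 - v.2) = -(Real.sqrt 3 * (v.2 - t.2)) := by ring
  have hthex : thexNorm (t - v) ≤ v.1 - t.1 := by
    unfold thexNorm
    simp only [Prod.fst_sub, Prod.snd_sub]
    apply max_le
    · rw [abs_sub_comm]; rw [abs_of_nonneg hx0]
    apply max_le
    · rw [div_le_iff₀ (by norm_num : (0:ℝ) < 2)]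
      rw [abs_le, hsy']; constructor <;> linarith [hsy, hxy, hx0]
    · rw [div_le_iff₀ (by norm_num : (0:ℝ) < 2)]
      rw [abs_le, hsy']; constructor <;> linarith [hsy, hxy, hx0]
  -- hexNorm (v - u) ≥ 2 * (v.1 - t.1)
  have habs : |v.1 - u.1| ≤ (v.2 - u.2) / Real.sqrt 3 := by
    rw [le_div_iff₀ s3]; linarith [hv32]
  have hhex : 2 * (v.1 - t.1) ≤ hexNorm (v - u) := by
    unfold hexNorm
    simp only [Prod.fst_sub, Prod.snd_sub]
    have h1 : 2 * (v.1 - t.1) ≤ |v.1 - u.1 + (v.2 - u.2) / Real.sqrt 3| := by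
      have habs2 : v.1 - u.1 ≤ |v.1 - u.1| := le_abs_self _
      have : 2 * (v.1 - t.1) ≤ v.1 - u.1 + (v.2 - u.2) / Real.sqrt 3 := by
        linarith [habs, habs2, huLeft]
      exact le_trans this (le_abs_self _)
    exact le_trans h1 (le_trans (le_max_left _ _) (le_max_right _ _))
  linarith [hthex, hhex]
end

section
/- The system of inequalities 2.5·y₀ + 3.5·y₁ < 1 and 5 − 2.5·y₀ ≤ (1 − x₀ − y₀) + 1 + (1 − x₀) + (1 − x₀ − x₅) + 5·min(x₀, x₅/2), with all variables nonnegative, has no solution. -/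
open Real

theorem stmt8 : ¬ ∃ y0 y1 x0 x5 : ℝ, 0 ≤ y0 ∧ 0 ≤ y1 ∧ 0 ≤ x0 ∧ 0 ≤ x5 ∧
    2.5 * y0 + 3.5 * y1 < 1 ∧
    5 - 2.5 * y0 ≤ (1 - x0 - y0) + 1 + (1 - x0) + (1 - x0 - x5)
      + 5 * min x0 (x5 / 2) := by
  rintro ⟨y0,y1,x0,x5,h0,h1,h2,h3,h4,h5⟩
  rcases le_total x0 (x5/2) with h|h <;>
    simp [min_eq_left, min_eq_right, h] at h5 <;> linarith
end

section
/- Let s, t be points with s ∈ C_t^0 to the right of the bisector B_t^0, ‖st‖_hex = 1, and let y₀ = ‖C_t^0 ∩ C_s^2‖ be the side length of the triangle T = C_t^0 ∩ C_s^2. Then 5·‖st‖_thex = 5 − 2.5·y₀. -/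
open Real

/-! Since `s` lies in the cone below `t`, its hexagonal distance to `t` is read off the height
alone, so `s - t = (x, -√3/2)` with `0 ≤ x ≤ 1/2`, and the tipped norm of `(x, -√3/2)` is
`(x + 3/2)/2`. The triangle `C_t^0 ∩ C_s^2` is the upward equilateral triangle with lower-left
vertex `s` whose base ends on the right edge of `C_t^0`, so its side is `1/2 - x`. -/

lemma sqrt_three_pos : 0 < √3 := Real.sqrt_pos.2 (by norm_num)

lemma sqrt_three_mul_self : √3 * √3 = 3 := Real.mul_self_sqrt (by norm_num)

lemma hexNorm_eq (v : ℝ × ℝ) :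
    hexNorm v = max (2 * |v.2|) (max |√3 * v.1 + v.2| |√3 * v.1 - v.2|) / √3 := by
  have h := sqrt_three_pos
  have e₁ : v.1 + v.2 / √3 = (√3 * v.1 + v.2) / √3 := by field_simp
  have e₂ : v.1 - v.2 / √3 = (√3 * v.1 - v.2) / √3 := by field_simp
  rw [hexNorm, e₁, e₂, abs_div, abs_div, abs_of_pos h, max_div_div_right h.le,
    max_div_div_right h.le]

lemma hexNorm_mk_zero (x : ℝ) : hexNorm (x, 0) = |x| := by
  simp [hexNorm]

lemma mem_cone0_iff {v : ℝ × ℝ} : v ∈ cone0 ↔ v.2 ≤ √3 * v.1 ∧ √3 * v.1 ≤ -v.2 := by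
  rw [cone0, Set.mem_ofPred_eq, ← abs_of_pos sqrt_three_pos, ← abs_mul, abs_of_pos sqrt_three_pos,
    abs_le]
  constructor
  · rintro ⟨-, h₁, h₂⟩
    exact ⟨by linarith, h₂⟩
  · rintro ⟨h₁, h₂⟩
    exact ⟨by linarith, by linarith, h₂⟩

lemma mem_cone_zero_iff {p q : ℝ × ℝ} :
    q ∈ cone p 0 ↔ q.2 - p.2 ≤ √3 * (q.1 - p.1) ∧ √3 * (q.1 - p.1) ≤ -(q.2 - p.2) := by
  simp [cone, localCoord, rot, mem_cone0_iff]

lemma mem_cone_two_iff {p q : ℝ × ℝ} :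
    q ∈ cone p 2 ↔ 0 ≤ q.2 - p.2 ∧ q.2 - p.2 ≤ √3 * (q.1 - p.1) := by
  have hθ : -(((2 : ZMod 6).val : ℝ) * (π / 3)) = -(π - π / 3) := by
    rw [show (2 : ZMod 6).val = 2 from rfl]; push_cast; ring
  have hcos : cos (-(π - π / 3)) = -(1 / 2) := by
    rw [cos_neg, cos_pi_sub, cos_pi_div_three]
  have hsin : sin (-(π - π / 3)) = -(√3 / 2) := by
    rw [sin_neg, sin_pi_sub, sin_pi_div_three]
  simp only [cone, localCoord, rot, Set.mem_ofPred_eq, mem_cone0_iff, hθ, hcos, hsin,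
    Prod.fst_sub, Prod.snd_sub]
  set x := q.1 - p.1
  set y := q.2 - p.2
  have e : √3 * (-(1 / 2) * x - -(√3 / 2) * y) = -(√3 * x) / 2 + 3 * y / 2 := by
    linear_combination (y / 2) * sqrt_three_mul_self
  rw [e]
  constructor
  · rintro ⟨h₁, h₂⟩
    exact ⟨by linarith, by linarith⟩
  · rintro ⟨h₁, h₂⟩
    exact ⟨by linarith, by linarith⟩

lemma hexNorm_of_mem_cone_zero {p q : ℝ × ℝ} (hq : q ∈ cone p 0) :
    hexNorm (q - p) = -2 * (q.2 - p.2) / √3 := by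
  obtain ⟨h₁, h₂⟩ := mem_cone_zero_iff.1 hq
  rw [hexNorm_eq, Prod.fst_sub, Prod.snd_sub, abs_of_nonpos (by linarith : q.2 - p.2 ≤ 0)]
  congr 1
  apply le_antisymm
  · refine max_le (by linarith) (max_le (abs_le.2 ⟨by linarith, by linarith⟩) ?_)
    exact abs_le.2 ⟨by linarith, by linarith⟩
  · exact le_max_of_le_left (by linarith)

lemma thexNorm_of_mem_cone_zero {p q : ℝ × ℝ} (hq : q ∈ cone p 0) (hx : p.1 ≤ q.1) :
    thexNorm (q - p) = ((q.1 - p.1) - √3 * (q.2 - p.2)) / 2 := by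
  obtain ⟨h₁, h₂⟩ := mem_cone_zero_iff.1 hq
  have h₃ : 3 * (q.1 - p.1) ≤ -(√3 * (q.2 - p.2)) := by
    nlinarith [sqrt_three_mul_self, sqrt_three_pos]
  rw [thexNorm, Prod.fst_sub, Prod.snd_sub, abs_of_nonneg (sub_nonneg.2 hx),
    abs_of_nonneg (by linarith : 0 ≤ q.1 - p.1 - √3 * (q.2 - p.2)),
    max_eq_right (div_le_div_of_nonneg_right (abs_le.2 ⟨by linarith, by linarith⟩) two_pos.le),
    max_eq_right (by linarith)]

/-- The closed equilateral triangle with lower-left vertex `a`, horizontal base of length `ℓ`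
and apex above the base. -/
def upTriangle (a : ℝ × ℝ) (ℓ : ℝ) : Set (ℝ × ℝ) :=
  {q | 0 ≤ q.2 - a.2 ∧ q.2 - a.2 ≤ √3 * (q.1 - a.1) ∧ √3 * (q.1 - a.1) + (q.2 - a.2) ≤ √3 * ℓ}

/-- On `upTriangle a ℓ` the three forms `2y`, `√3x + y`, `√3x - y` of `hexNorm_eq`, evaluated
at `q - a`, all take values in `[0, √3 ℓ]`. -/
lemma hexNorm_sub_le_of_mem_upTriangle {a p q : ℝ × ℝ} {ℓ : ℝ} (hp : p ∈ upTriangle a ℓ)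
    (hq : q ∈ upTriangle a ℓ) : hexNorm (p - q) ≤ ℓ := by
  obtain ⟨hp₁, hp₂, hp₃⟩ := hp
  obtain ⟨hq₁, hq₂, hq₃⟩ := hq
  rw [hexNorm_eq, div_le_iff₀ sqrt_three_pos, Prod.fst_sub, Prod.snd_sub]
  refine max_le ?_ (max_le ?_ ?_)
  · have h : |p.2 - q.2| ≤ √3 * ℓ / 2 := abs_le.2 ⟨by linarith, by linarith⟩
    linarith
  · exact (abs_le.2 ⟨by linarith, by linarith⟩).trans_eq (mul_comm _ _)
  · exact (abs_le.2 ⟨by linarith, by linarith⟩).trans_eq (mul_comm _ _)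

lemma sideLen_upTriangle (a : ℝ × ℝ) {ℓ : ℝ} (hℓ : 0 ≤ ℓ) : sideLen (upTriangle a ℓ) = ℓ := by
  have ha : a ∈ upTriangle a ℓ := by
    simp [upTriangle, mul_nonneg sqrt_three_pos.le hℓ]
  have hb : a + (ℓ, 0) ∈ upTriangle a ℓ := by
    simp [upTriangle, mul_nonneg sqrt_three_pos.le hℓ]
  refine IsGreatest.csSup_eq ⟨⟨(a + (ℓ, 0), a), ⟨hb, ha⟩, ?_⟩, ?_⟩
  · simp [hexNorm_mk_zero, abs_of_nonneg hℓ]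
  · rintro _ ⟨⟨p, q⟩, ⟨hp, hq⟩, rfl⟩
    exact hexNorm_sub_le_of_mem_upTriangle hp hq

lemma cone_zero_inter_cone_two {s t : ℝ × ℝ} (hs : s ∈ cone t 0) :
    cone t 0 ∩ cone s 2 = upTriangle s (-((s.1 - t.1) + (s.2 - t.2) / √3)) := by
  obtain ⟨hs₁, hs₂⟩ := mem_cone_zero_iff.1 hs
  have hℓ : √3 * -((s.1 - t.1) + (s.2 - t.2) / √3) = -(√3 * (s.1 - t.1) + (s.2 - t.2)) := by
    field_simp
  ext q
  simp only [Set.mem_inter_iff, mem_cone_zero_iff, mem_cone_two_iff, upTriangle,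
    Set.mem_ofPred_eq, hℓ]
  constructor
  · rintro ⟨⟨h₁, h₂⟩, h₃, h₄⟩
    exact ⟨h₃, h₄, by linarith⟩
  · rintro ⟨h₁, h₂, h₃⟩
    exact ⟨⟨by linarith, by linarith⟩, h₁, h₂⟩

theorem stmt19 (s t : ℝ × ℝ) (hs : s ∈ cone t 0) (hRight : t.1 ≤ s.1)
    (hunit : hexNorm (s - t) = 1) :
    5 * thexNorm (s - t) = 5 - 2.5 * sideLen (cone t 0 ∩ cone s 2) := by
  have hy : s.2 - t.2 = -(√3 / 2) := by
    have h := hexNorm_of_mem_cone_zero hs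
    rw [hunit, eq_div_iff sqrt_three_pos.ne'] at h
    linarith
  have hx : s.1 - t.1 ≤ 1 / 2 := by
    have h := (mem_cone_zero_iff.1 hs).2
    rw [hy] at h
    exact le_of_mul_le_mul_left (by linarith) sqrt_three_pos
  have hℓ : -((s.1 - t.1) + (s.2 - t.2) / √3) = 1 / 2 - (s.1 - t.1) := by
    rw [hy]; field_simp; ring
  rw [thexNorm_of_mem_cone_zero hs hRight, cone_zero_inter_cone_two hs, hℓ,
    sideLen_upTriangle s (by linarith), hy]
  linear_combination (5 / 4) * sqrt_three_mul_self
end
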